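/- Let ε₀ > 0 be sufficiently small, let h be a polynomial satisfying the coefficient smallness condition, and let K_L be a large number. Then the total number of bad lines is at most 10^{10d} · c₁(K_L^{-1})^{-1}, where c₁(K_L^{-1}) = 10^{-10d} ε₀ K_L^{-1}. -/

import Mathlib

open MeasureTheory

noncomputable section

/-- The square `[-1,1]²`. -/
def unitSq : Set (ℝ × ℝ) := Set.Icc (-1 : ℝ) 1 ×ˢ Set.Icc (-1 : ℝ) 1

/-- The polynomial `h(ξ,η) = ξη + a₂₀ξ² + a₂₂η² + Σ_{i=3}^d Σ_{j=0}^i a_{i,j} ξ^{i-j} η^j`. -/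
def hpoly (d : ℕ) (a : ℕ → ℕ → ℝ) (ξ η : ℝ) : ℝ :=
  ξ * η + a 2 0 * ξ ^ 2 + a 2 2 * η ^ 2 +
    ∑ i ∈ Finset.Icc 3 d, ∑ j ∈ Finset.range (i + 1), a i j * ξ ^ (i - j) * η ^ j

/-- Coefficient smallness condition
`|a₂₀| + |a₂₂| + 100^d Σ_{i=3}^d Σ_{j=0}^i |a_{i,j}| ≤ ε₀`. -/
def CoeffSmall (d : ℕ) (ε₀ : ℝ) (a : ℕ → ℕ → ℝ) : Prop :=
  |a 2 0| + |a 2 2| +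
      100 ^ d * ∑ i ∈ Finset.Icc 3 d, ∑ j ∈ Finset.range (i + 1), |a i j| ≤ ε₀

/-- `c₁(K_L⁻¹) = 10^{-10d} ε₀ K_L^{-1}`. -/
def c1 (d : ℕ) (ε₀ KL : ℝ) : ℝ := ε₀ / (10 ^ (10 * d) * KL)

/-- Euclidean distance in the plane. -/
def eudist (p q : ℝ × ℝ) : ℝ := Real.sqrt ((p.1 - q.1) ^ 2 + (p.2 - q.2) ^ 2)

/-- `D` is a maximal `c`-separated subset of the unit circle. -/
def MaxSepSet (c : ℝ) (D : Set (ℝ × ℝ)) : Prop :=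
  (∀ v ∈ D, v.1 ^ 2 + v.2 ^ 2 = 1) ∧
  (∀ v ∈ D, ∀ w ∈ D, v ≠ w → c ≤ eudist v w) ∧
  (∀ w : ℝ × ℝ, w.1 ^ 2 + w.2 ^ 2 = 1 → w ∉ D → ∃ v ∈ D, eudist w v < c)

/-- The line `l_{1,a,v}` through `(0,a)` with direction `v` (when `|v₂| ≤ |v₁|`),
resp. `l_{2,a,v}` through `(a,0)` with direction `v` (when `|v₂| > |v₁|`). -/
def lineSet (a : ℝ) (v : ℝ × ℝ) : Set (ℝ × ℝ) :=
  if |v.2| ≤ |v.1| then {p | ∃ t : ℝ, p = (t * v.1, a + t * v.2)}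
  else {p | ∃ t : ℝ, p = (a + t * v.1, t * v.2)}

/-- The strip of (Euclidean) width `c` around the line `l_{ι,a,v}`. -/
def stripSet (c : ℝ) (a : ℝ) (v : ℝ × ℝ) : Set (ℝ × ℝ) :=
  {p | ∃ q ∈ lineSet a v, eudist p q ≤ c}

/-- `M_l⁻¹`, the inverse of the affine map `M_l` which first translates the base point
of the line `l_{ι,a,v}` to the origin and then rotates `v` to `(1,0)`. -/
def Minv (a : ℝ) (v : ℝ × ℝ) (p : ℝ × ℝ) : ℝ × ℝ :=
  if |v.2| ≤ |v.1| then (v.1 * p.1 - v.2 * p.2, v.2 * p.1 + v.1 * p.2 + a)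
  else (v.1 * p.1 - v.2 * p.2 + a, v.2 * p.1 + v.1 * p.2)

/-- The line `l_{ι,a,v}` is a bad line for `h`: writing
`(h ∘ M_l⁻¹)(ξ,η) = Σ c_{i,j} ξ^{i-j} η^j`, one has
`max_{2 ≤ i ≤ d} |c_{i,0}| ≤ 10^{-5d} ε₀ K_L^{-1}` (resp. `c_{i,i}` when `|v₂| > |v₁|`). -/
def IsBadLine (d : ℕ) (h : ℝ → ℝ → ℝ) (ε₀ KL : ℝ) (a : ℝ) (v : ℝ × ℝ) : Prop :=
  ∃ c : ℕ → ℕ → ℝ,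
    (∀ ξ η : ℝ, h (Minv a v (ξ, η)).1 (Minv a v (ξ, η)).2 =
      ∑ i ∈ Finset.range (d + 1), ∑ j ∈ Finset.range (i + 1),
        c i j * ξ ^ (i - j) * η ^ j) ∧
    ((|v.2| ≤ |v.1| → ∀ i ∈ Finset.Icc 2 d, |c i 0| ≤ ε₀ / (10 ^ (5 * d) * KL)) ∧
     (¬ |v.2| ≤ |v.1| → ∀ i ∈ Finset.Icc 2 d, |c i i| ≤ ε₀ / (10 ^ (5 * d) * KL)))

/-- `(a, v)` is an admissible parameter (`a ∈ c₁ℤ ∩ [-10,10]`, `v ∈ 𝔻`) giving a bad line. -/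
def IsBadParam (d : ℕ) (h : ℝ → ℝ → ℝ) (ε₀ KL : ℝ) (D : Set (ℝ × ℝ))
    (a : ℝ) (v : ℝ × ℝ) : Prop :=
  (∃ m : ℤ, a = (m : ℝ) * c1 d ε₀ KL) ∧ |a| ≤ 10 ∧ v ∈ D ∧ IsBadLine d h ε₀ KL a v

/-- `L` is a bad strip: the `c₁`-neighborhood of a bad line. -/
def IsBadStrip (d : ℕ) (h : ℝ → ℝ → ℝ) (ε₀ KL : ℝ) (D : Set (ℝ × ℝ))
    (L : Set (ℝ × ℝ)) : Prop :=
  ∃ a v, IsBadParam d h ε₀ KL D a v ∧ L = stripSet (c1 d ε₀ KL) a v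

/-! Restricting `h ∘ M_l⁻¹` to the test axis shows that a bad line makes the second difference
of `h` at the base point `b`, in a unit direction `u` (the direction `v`, turned by a right angle
for the second family), of size `O(d · 10^{-5d} ε₀ K_L⁻¹)`. This second difference is
`2 (u₁u₂ + a₂₀u₁² + a₂₂u₂²)` plus a term that is small and `ε₀`-Lipschitz in `u`, because
`100^d` dominates the Lipschitz constants of the higher monomials on `[-11, 11]²`. For
`|u₂| ≤ |u₁|` this pins `u₂` down to within `8 (d + 1) 10^{5d} c₁` among the bad lines with the
same base point, family and sign of `u₁`. Distinct directions of `𝔻` being `c₁` apart, such a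
group has `O(d 10^{5d})` members; there are `O(1 / c₁)` base points and four groups for each. -/
def hpolyQuad (a : ℕ → ℕ → ℝ) (p : ℝ × ℝ) : ℝ :=
  p.1 * p.2 + a 2 0 * p.1 ^ 2 + a 2 2 * p.2 ^ 2

def hpolyHigh (d : ℕ) (a : ℕ → ℕ → ℝ) (p : ℝ × ℝ) : ℝ :=
  ∑ i ∈ Finset.Icc 3 d, ∑ j ∈ Finset.range (i + 1), a i j * p.1 ^ (i - j) * p.2 ^ j

lemma hpoly_eq_hpolyQuad_add_hpolyHigh (d : ℕ) (a : ℕ → ℕ → ℝ) (p : ℝ × ℝ) :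
    hpoly d a p.1 p.2 = hpolyQuad a p + hpolyHigh d a p :=
  rfl

lemma abs_fst_le_and_abs_snd_le_of_norm_le {M : ℝ} {p : ℝ × ℝ} (hp : ‖p‖ ≤ M) :
    |p.1| ≤ M ∧ |p.2| ≤ M := by
  rw [Prod.norm_def, max_le_iff] at hp
  exact hp

lemma abs_pow_mul_pow_sub_le {M : ℝ} {p q : ℝ × ℝ} (hp : ‖p‖ ≤ M) (hq : ‖q‖ ≤ M) (m j : ℕ) :
    |p.1 ^ m * p.2 ^ j - q.1 ^ m * q.2 ^ j| ≤ (m + j) * M ^ (m + j - 1) * ‖p - q‖ := by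
  obtain ⟨hp1, hp2⟩ := abs_fst_le_and_abs_snd_le_of_norm_le hp
  obtain ⟨hq1, hq2⟩ := abs_fst_le_and_abs_snd_le_of_norm_le hq
  obtain ⟨hd1, hd2⟩ := abs_fst_le_and_abs_snd_le_of_norm_le (le_refl ‖p - q‖)
  have hM : 0 ≤ M := (abs_nonneg _).trans hp1
  have hpow_sub {x y : ℝ} (hx : |x| ≤ M) (hy : |y| ≤ M) (n : ℕ) :
      |x ^ n - y ^ n| ≤ |x - y| * n * M ^ (n - 1) :=
    (abs_pow_sub_pow_le x y n).trans (by gcongr; exact max_le hx hy)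
  have hpow {x : ℝ} (hx : |x| ≤ M) (n : ℕ) : |x ^ n| ≤ M ^ n := by
    rw [abs_pow]; gcongr
  have h1 : |(p.1 ^ m - q.1 ^ m) * p.2 ^ j| ≤ m * M ^ (m + j - 1) * ‖p - q‖ := by
    rcases Nat.eq_zero_or_pos m with rfl | hm
    · simp
    calc |(p.1 ^ m - q.1 ^ m) * p.2 ^ j|
        ≤ (‖p - q‖ * m * M ^ (m - 1)) * M ^ j := by
          rw [abs_mul]
          gcongr
          · exact (hpow_sub hp1 hq1 m).trans (by gcongr; exact hd1)
          · exact hpow hp2 j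
      _ = m * M ^ (m + j - 1) * ‖p - q‖ := by
          rw [show m + j - 1 = m - 1 + j by omega, pow_add]; ring
  have h2 : |q.1 ^ m * (p.2 ^ j - q.2 ^ j)| ≤ j * M ^ (m + j - 1) * ‖p - q‖ := by
    rcases Nat.eq_zero_or_pos j with rfl | hj
    · simp
    calc |q.1 ^ m * (p.2 ^ j - q.2 ^ j)|
        ≤ M ^ m * (‖p - q‖ * j * M ^ (j - 1)) := by
          rw [abs_mul]
          gcongr
          · exact hpow hq1 m
          · exact (hpow_sub hp2 hq2 j).trans (by gcongr; exact hd2)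
      _ = j * M ^ (m + j - 1) * ‖p - q‖ := by
          rw [show m + j - 1 = m + (j - 1) by omega, pow_add]; ring
  calc |p.1 ^ m * p.2 ^ j - q.1 ^ m * q.2 ^ j|
      = |(p.1 ^ m - q.1 ^ m) * p.2 ^ j + q.1 ^ m * (p.2 ^ j - q.2 ^ j)| := by ring_nf
    _ ≤ m * M ^ (m + j - 1) * ‖p - q‖ + j * M ^ (m + j - 1) * ‖p - q‖ :=
        (abs_add_le _ _).trans (add_le_add h1 h2)
    _ = (m + j) * M ^ (m + j - 1) * ‖p - q‖ := by ring

lemma mul_eleven_pow_pred_le_hundred_pow (i : ℕ) : i * 11 ^ (i - 1) ≤ 100 ^ i :=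
  calc i * 11 ^ (i - 1) ≤ 2 ^ i * 11 ^ i :=
        Nat.mul_le_mul (Nat.lt_two_pow_self).le (Nat.pow_le_pow_right (by norm_num) (by omega))
    _ = 22 ^ i := by rw [← mul_pow]; norm_num
    _ ≤ 100 ^ i := Nat.pow_le_pow_left (by norm_num) i

lemma abs_hpolyHigh_sub_le (d : ℕ) (a : ℕ → ℕ → ℝ) {p q : ℝ × ℝ} (hp : ‖p‖ ≤ 11) (hq : ‖q‖ ≤ 11) :
    |hpolyHigh d a p - hpolyHigh d a q| ≤
      100 ^ d * (∑ i ∈ Finset.Icc 3 d, ∑ j ∈ Finset.range (i + 1), |a i j|) * ‖p - q‖ := by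
  have hterm : ∀ i ∈ Finset.Icc 3 d, ∀ j ∈ Finset.range (i + 1),
      |a i j * p.1 ^ (i - j) * p.2 ^ j - a i j * q.1 ^ (i - j) * q.2 ^ j| ≤
        |a i j| * (100 ^ d * ‖p - q‖) := by
    intro i hi j hj
    have hid : i ≤ d := (Finset.mem_Icc.mp hi).2
    have hji : i - j + j = i := Nat.sub_add_cancel (Nat.lt_succ_iff.mp (Finset.mem_range.mp hj))
    have hconst : ((i - j : ℕ) + (j : ℝ)) * 11 ^ (i - j + j - 1) ≤ 100 ^ d := by
      rw [← Nat.cast_add, hji]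
      exact_mod_cast (mul_eleven_pow_pred_le_hundred_pow i).trans
        (Nat.pow_le_pow_right (by norm_num) hid)
    rw [mul_assoc, mul_assoc, ← mul_sub, abs_mul]
    gcongr
    exact (abs_pow_mul_pow_sub_le hp hq (i - j) j).trans (by gcongr)
  calc |hpolyHigh d a p - hpolyHigh d a q|
      = |∑ i ∈ Finset.Icc 3 d, ∑ j ∈ Finset.range (i + 1),
          (a i j * p.1 ^ (i - j) * p.2 ^ j - a i j * q.1 ^ (i - j) * q.2 ^ j)| := by
        simp only [hpolyHigh, ← Finset.sum_sub_distrib]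
    _ ≤ ∑ i ∈ Finset.Icc 3 d, ∑ j ∈ Finset.range (i + 1), |a i j| * (100 ^ d * ‖p - q‖) :=
        (Finset.abs_sum_le_sum_abs _ _).trans <| Finset.sum_le_sum fun i hi =>
          (Finset.abs_sum_le_sum_abs _ _).trans <| Finset.sum_le_sum (hterm i hi)
    _ = 100 ^ d * (∑ i ∈ Finset.Icc 3 d, ∑ j ∈ Finset.range (i + 1), |a i j|) * ‖p - q‖ := by
        simp only [← Finset.sum_mul]; ring

def secondDiff (f : ℝ × ℝ → ℝ) (b u : ℝ × ℝ) : ℝ := f (b + u) + f (b - u) - 2 * f b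

lemma secondDiff_hpolyQuad (a : ℕ → ℕ → ℝ) (b u : ℝ × ℝ) :
    secondDiff (hpolyQuad a) b u = 2 * hpolyQuad a u := by
  simp only [secondDiff, hpolyQuad, Prod.fst_add, Prod.snd_add, Prod.fst_sub, Prod.snd_sub]
  ring

lemma abs_secondDiff_sub_le {f : ℝ × ℝ → ℝ} {R c : ℝ}
    (hf : ∀ p q : ℝ × ℝ, ‖p‖ ≤ R → ‖q‖ ≤ R → |f p - f q| ≤ c * ‖p - q‖)
    {b u u' : ℝ × ℝ} (hu : ‖b‖ + ‖u‖ ≤ R) (hu' : ‖b‖ + ‖u'‖ ≤ R) :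
    |secondDiff f b u - secondDiff f b u'| ≤ 2 * c * ‖u - u'‖ := by
  have hadd := hf (b + u) (b + u') ((norm_add_le _ _).trans hu) ((norm_add_le _ _).trans hu')
  have hsub := hf (b - u) (b - u') ((norm_sub_le _ _).trans hu) ((norm_sub_le _ _).trans hu')
  rw [add_sub_add_left_eq_sub] at hadd
  rw [sub_sub_sub_cancel_left, norm_sub_rev] at hsub
  calc |secondDiff f b u - secondDiff f b u'|
      = |(f (b + u) - f (b + u')) + (f (b - u) - f (b - u'))| := by
        rw [secondDiff, secondDiff]; ring_nf
    _ ≤ 2 * c * ‖u - u'‖ := (abs_add_le _ _).trans (by linarith)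

lemma abs_second_diff_le_of_coeffs (d : ℕ) {g : ℝ → ℝ} {β : ℕ → ℝ} {θ : ℝ} (hθ : 0 ≤ θ)
    (hg : ∀ s, g s = ∑ i ∈ Finset.range (d + 1), β i * s ^ i)
    (hβ : ∀ i ∈ Finset.Icc 2 d, |β i| ≤ θ) :
    |g 1 + g (-1) - 2 * g 0| ≤ 2 * (d + 1) * θ := by
  have hterm : ∀ i ∈ Finset.range (d + 1), |β i * (1 + (-1) ^ i - 2 * 0 ^ i)| ≤ 2 * θ := by
    intro i hi
    match i with
    | 0 => norm_num; positivity
    | 1 => norm_num; positivity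
    | k + 2 =>
      have hβk := hβ (k + 2) (Finset.mem_Icc.mpr ⟨by omega, by simp at hi; omega⟩)
      rw [abs_mul]
      calc |β (k + 2)| * |1 + (-1) ^ (k + 2) - 2 * 0 ^ (k + 2)| ≤ θ * 2 := by
            gcongr
            rcases neg_one_pow_eq_or ℝ (k + 2) with h | h <;> norm_num [h]
        _ = 2 * θ := mul_comm _ _
  calc |g 1 + g (-1) - 2 * g 0|
      = |∑ i ∈ Finset.range (d + 1), β i * (1 + (-1) ^ i - 2 * 0 ^ i)| := by
        simp only [hg, Finset.mul_sum, ← Finset.sum_add_distrib, ← Finset.sum_sub_distrib]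
        congr 1; refine Finset.sum_congr rfl fun i _ => ?_; ring
    _ ≤ ∑ i ∈ Finset.range (d + 1), 2 * θ :=
        (Finset.abs_sum_le_sum_abs _ _).trans (Finset.sum_le_sum hterm)
    _ = 2 * (d + 1) * θ := by simp; ring

def basePoint (t : ℝ) (v : ℝ × ℝ) : ℝ × ℝ := if |v.2| ≤ |v.1| then (0, t) else (t, 0)

-- Along `l_{2,a,v}` the bad-line test runs in the `η`-direction, i.e. across `v`.
def tangent (v : ℝ × ℝ) : ℝ × ℝ := if |v.2| ≤ |v.1| then v else (v.2, -v.1)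

lemma IsBadLine.abs_secondDiff_le {d : ℕ} {h : ℝ → ℝ → ℝ} {ε₀ KL t : ℝ} {v : ℝ × ℝ}
    (hbad : IsBadLine d h ε₀ KL t v) (hθ : 0 ≤ ε₀ / (10 ^ (5 * d) * KL)) :
    |secondDiff (Function.uncurry h) (basePoint t v) (tangent v)| ≤
      2 * (d + 1) * (ε₀ / (10 ^ (5 * d) * KL)) := by
  obtain ⟨c, hc, hfst, hsnd⟩ := hbad
  by_cases hv : |v.2| ≤ |v.1|
  · have := abs_second_diff_le_of_coeffs d (g := fun s => h (Minv t v (s, 0)).1 (Minv t v (s, 0)).2)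
      (β := fun i => c i 0) hθ (fun s => by simp [hc, Finset.sum_range_succ']) (hfst hv)
    convert this using 3
    simp only [secondDiff, basePoint, tangent, Minv, hv, if_true, Function.uncurry_def,
      Prod.fst_add, Prod.snd_add, Prod.fst_sub, Prod.snd_sub]
    ring_nf
  · have := abs_second_diff_le_of_coeffs d (g := fun s => h (Minv t v (0, s)).1 (Minv t v (0, s)).2)
      (β := fun i => c i i) hθ (fun s => by
        simp only [hc]
        refine Finset.sum_congr rfl fun i _ => ?_
        rw [Finset.sum_range_succ, Finset.sum_eq_zero fun j hj => by
          simp [zero_pow (Nat.sub_ne_zero_of_lt (Finset.mem_range.mp hj))]]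
        simp) (hsnd hv)
    convert this using 3
    simp only [secondDiff, basePoint, tangent, Minv, hv, if_false, Function.uncurry_def,
      Prod.fst_add, Prod.snd_add, Prod.fst_sub, Prod.snd_sub]
    ring_nf

lemma half_le_sq_fst {u : ℝ × ℝ} (hu : u.1 ^ 2 + u.2 ^ 2 = 1) (hcone : |u.2| ≤ |u.1|) :
    1 / 2 ≤ u.1 ^ 2 := by
  nlinarith [sq_le_sq.mpr hcone]

lemma half_le_abs_fst {u : ℝ × ℝ} (hu : u.1 ^ 2 + u.2 ^ 2 = 1) (hcone : |u.2| ≤ |u.1|) :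
    1 / 2 ≤ |u.1| := by
  nlinarith [half_le_sq_fst hu hcone, sq_abs u.1, abs_nonneg u.1]

lemma abs_snd_le_of_abs_hpolyQuad_add_le {a : ℕ → ℕ → ℝ} {ε δ r : ℝ} {u : ℝ × ℝ}
    (ha20 : |a 2 0| ≤ ε) (ha22 : |a 2 2| ≤ ε) (hr : |r| ≤ ε) (hδ : δ ≤ ε)
    (hu : u.1 ^ 2 + u.2 ^ 2 = 1) (hcone : |u.2| ≤ |u.1|) (hq : |hpolyQuad a u + r| ≤ δ) :
    |u.2| ≤ 6 * ε := by
  have hquad : |a 2 0 * u.1 ^ 2 + a 2 2 * u.2 ^ 2| ≤ ε :=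
    calc |a 2 0 * u.1 ^ 2 + a 2 2 * u.2 ^ 2| ≤ |a 2 0 * u.1 ^ 2| + |a 2 2 * u.2 ^ 2| :=
          abs_add_le _ _
      _ = |a 2 0| * u.1 ^ 2 + |a 2 2| * u.2 ^ 2 := by rw [abs_mul, abs_mul, abs_sq, abs_sq]
      _ ≤ ε * u.1 ^ 2 + ε * u.2 ^ 2 := by gcongr
      _ = ε := by rw [← mul_add, hu, mul_one]
  have hprod : |u.1| * |u.2| ≤ 3 * ε := by
    rw [← abs_mul]
    calc |u.1 * u.2| = |(hpolyQuad a u + r) - (a 2 0 * u.1 ^ 2 + a 2 2 * u.2 ^ 2) - r| := by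
          rw [hpolyQuad]; ring_nf
      _ ≤ |hpolyQuad a u + r| + |a 2 0 * u.1 ^ 2 + a 2 2 * u.2 ^ 2| + |r| :=
          (abs_sub _ _).trans (add_le_add_left (abs_sub _ _) _)
      _ ≤ 3 * ε := by linarith
  nlinarith [half_le_abs_fst hu hcone, abs_nonneg u.2]

lemma abs_fst_sub_le_of_sq_add_sq_eq_one {u u' : ℝ × ℝ} (hu : u.1 ^ 2 + u.2 ^ 2 = 1)
    (hu' : u'.1 ^ 2 + u'.2 ^ 2 = 1) (hcone : |u.2| ≤ |u.1|) (hcone' : |u'.2| ≤ |u'.1|)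
    (hsign : 0 ≤ u.1 * u'.1) :
    |u.1 - u'.1| ≤ |u.2 + u'.2| * |u.2 - u'.2| := by
  have hsum : 1 ≤ |u.1 + u'.1| := (one_le_sq_iff_one_le_abs _).mp <| by
    nlinarith [half_le_sq_fst hu hcone, half_le_sq_fst hu' hcone']
  calc |u.1 - u'.1| ≤ |u.1 - u'.1| * |u.1 + u'.1| := le_mul_of_one_le_right (abs_nonneg _) hsum
    _ = |u.2 + u'.2| * |u.2 - u'.2| := by
        rw [← abs_mul, ← abs_mul, ← abs_neg]; congr 1; linear_combination hu' - hu

-- `u.1 * Δu.2`, with `|u.1| ≥ 1/2`, dominates the change of `hpolyQuad a u + r`: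
-- every other contribution carries a factor `ε`.
lemma abs_snd_sub_le_of_abs_hpolyQuad_add_le {a : ℕ → ℕ → ℝ} {ε δ r r' : ℝ} {u u' : ℝ × ℝ}
    (hε : ε ≤ 1 / 1000) (hδ : δ ≤ ε) (ha20 : |a 2 0| ≤ ε) (ha22 : |a 2 2| ≤ ε)
    (hu : u.1 ^ 2 + u.2 ^ 2 = 1) (hu' : u'.1 ^ 2 + u'.2 ^ 2 = 1)
    (hcone : |u.2| ≤ |u.1|) (hcone' : |u'.2| ≤ |u'.1|) (hsign : 0 ≤ u.1 * u'.1)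
    (hr : |r| ≤ ε) (hr' : |r'| ≤ ε) (hrr' : |r - r'| ≤ ε * ‖u - u'‖)
    (hq : |hpolyQuad a u + r| ≤ δ) (hq' : |hpolyQuad a u' + r'| ≤ δ) :
    |u.2 - u'.2| ≤ 8 * δ ∧ |u.1 - u'.1| ≤ |u.2 - u'.2| := by
  set D := |u.2 - u'.2| with hD
  set E := |u.1 - u'.1| with hE'
  have hε0 : 0 ≤ ε := (abs_nonneg _).trans ha20
  have hD0 : 0 ≤ D := abs_nonneg _
  have hk := abs_snd_le_of_abs_hpolyQuad_add_le ha20 ha22 hr hδ hu hcone hq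
  have hk' := abs_snd_le_of_abs_hpolyQuad_add_le ha20 ha22 hr' hδ hu' hcone' hq'
  have hksum : |u.2 + u'.2| ≤ 12 * ε := (abs_add_le _ _).trans (by linarith)
  have hE : E ≤ 12 * ε * D :=
    (abs_fst_sub_le_of_sq_add_sq_eq_one hu hu' hcone hcone' hsign).trans (by gcongr)
  have hosum : |u.1 + u'.1| ≤ 2 := by
    have h1 := abs_le_of_sq_le_sq' (a := u.1) (b := 1) (by nlinarith) zero_le_one
    have h2 := abs_le_of_sq_le_sq' (a := u'.1) (b := 1) (by nlinarith) zero_le_one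
    exact abs_le.mpr ⟨by linarith, by linarith⟩
  have hnorm : ‖u - u'‖ ≤ 12 * ε * D + D := by
    rw [Prod.norm_def]
    exact max_le (by simp only [Prod.fst_sub, Real.norm_eq_abs, ← hE']; linarith)
      (by simp only [Prod.snd_sub, Real.norm_eq_abs, ← hD]; nlinarith)
  have hlin : |u.1| * D ≤
      |(hpolyQuad a u + r) - (hpolyQuad a u' + r')| + |u'.2| * E +
        |a 2 0| * (E * |u.1 + u'.1|) + |a 2 2| * (D * |u.2 + u'.2|) + |r - r'| :=
    calc |u.1| * D
        = |(hpolyQuad a u + r) - (hpolyQuad a u' + r') - u'.2 * (u.1 - u'.1) -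
            a 2 0 * ((u.1 - u'.1) * (u.1 + u'.1)) - a 2 2 * ((u.2 - u'.2) * (u.2 + u'.2)) -
            (r - r')| := by
          rw [← abs_mul]; congr 1; simp only [hpolyQuad]; ring
      _ ≤ |(hpolyQuad a u + r) - (hpolyQuad a u' + r')| + |u'.2 * (u.1 - u'.1)| +
            |a 2 0 * ((u.1 - u'.1) * (u.1 + u'.1))| + |a 2 2 * ((u.2 - u'.2) * (u.2 + u'.2))| +
            |r - r'| := by
          refine (abs_sub _ _).trans (add_le_add ?_ le_rfl)
          refine (abs_sub _ _).trans (add_le_add ?_ le_rfl)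
          refine (abs_sub _ _).trans (add_le_add ?_ le_rfl)
          exact abs_sub _ _
      _ = _ := by simp only [abs_mul, ← hD, ← hE']
  have h0 : |(hpolyQuad a u + r) - (hpolyQuad a u' + r')| ≤ 2 * δ :=
    (abs_sub _ _).trans (by linarith)
  have h1 : |u'.2| * E ≤ 6 * ε * (12 * ε * D) := by gcongr
  have h2 : |a 2 0| * (E * |u.1 + u'.1|) ≤ ε * (12 * ε * D * 2) := by gcongr
  have h3 : |a 2 2| * (D * |u.2 + u'.2|) ≤ ε * (D * (12 * ε)) := by gcongr
  have h4 : |r - r'| ≤ ε * (12 * ε * D + D) := hrr'.trans (by gcongr)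
  have hεD : ε * D ≤ D / 1000 := by nlinarith
  have hεεD : ε * (ε * D) ≤ D / 1000 := by nlinarith [mul_nonneg hε0 hD0]
  have hhalf : 1 / 2 * D ≤ |u.1| * D := by gcongr; exact half_le_abs_fst hu hcone
  exact ⟨by linarith, hE.trans (by nlinarith)⟩

lemma secondDiff_uncurry_hpoly (d : ℕ) (a : ℕ → ℕ → ℝ) (b u : ℝ × ℝ) :
    secondDiff (Function.uncurry (hpoly d a)) b u =
      2 * (hpolyQuad a u + secondDiff (hpolyHigh d a) b u / 2) := by
  have hquad := secondDiff_hpolyQuad a b u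
  simp only [secondDiff, Function.uncurry_def, hpoly_eq_hpolyQuad_add_hpolyHigh] at hquad ⊢
  linarith

section CoeffSmall

variable {d : ℕ} {ε₀ : ℝ} {a : ℕ → ℕ → ℝ}

lemma CoeffSmall.each_term_le (h : CoeffSmall d ε₀ a) :
    |a 2 0| ≤ ε₀ ∧ |a 2 2| ≤ ε₀ ∧
      100 ^ d * (∑ i ∈ Finset.Icc 3 d, ∑ j ∈ Finset.range (i + 1), |a i j|) ≤ ε₀ := by
  have : 0 ≤ 100 ^ d * (∑ i ∈ Finset.Icc 3 d, ∑ j ∈ Finset.range (i + 1), |a i j|) := by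
    positivity
  unfold CoeffSmall at h
  exact ⟨by linarith [abs_nonneg (a 2 2)], by linarith [abs_nonneg (a 2 0)],
    by linarith [abs_nonneg (a 2 0), abs_nonneg (a 2 2)]⟩

lemma CoeffSmall.abs_secondDiff_hpolyHigh_sub_le (h : CoeffSmall d ε₀ a) {b u u' : ℝ × ℝ}
    (hb : ‖b‖ ≤ 10) (hu : ‖u‖ ≤ 1) (hu' : ‖u'‖ ≤ 1) :
    |secondDiff (hpolyHigh d a) b u / 2 - secondDiff (hpolyHigh d a) b u' / 2| ≤
      ε₀ * ‖u - u'‖ := by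
  have hsd := abs_secondDiff_sub_le (fun p q hp hq => abs_hpolyHigh_sub_le d a hp hq)
    (b := b) (u := u) (u' := u') (by linarith) (by linarith)
  rw [← sub_div, abs_div, abs_two, div_le_iff₀ two_pos]
  calc _ ≤ _ := hsd
    _ ≤ 2 * ε₀ * ‖u - u'‖ := by gcongr; exact h.each_term_le.2.2
    _ = _ := by ring

lemma CoeffSmall.abs_secondDiff_hpolyHigh_le (h : CoeffSmall d ε₀ a) {b u : ℝ × ℝ}
    (hb : ‖b‖ ≤ 10) (hu : ‖u‖ ≤ 1) :
    |secondDiff (hpolyHigh d a) b u / 2| ≤ ε₀ := by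
  have hε₀ : 0 ≤ ε₀ := (abs_nonneg _).trans h.each_term_le.1
  have h0 : secondDiff (hpolyHigh d a) b 0 = 0 := by
    simp only [secondDiff, add_zero, sub_zero]; ring
  have := h.abs_secondDiff_hpolyHigh_sub_le hb hu (u' := 0) (by simp)
  rw [h0, zero_div, sub_zero, sub_zero] at this
  exact this.trans (mul_le_of_le_one_right hε₀ hu)

end CoeffSmall

def dirClass (v : ℝ × ℝ) : Bool × Bool := (decide (|v.2| ≤ |v.1|), decide (0 ≤ (tangent v).1))

lemma tangent_sq_add_sq (v : ℝ × ℝ) :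
    (tangent v).1 ^ 2 + (tangent v).2 ^ 2 = v.1 ^ 2 + v.2 ^ 2 := by
  unfold tangent; split_ifs <;> ring

lemma abs_tangent_snd_le (v : ℝ × ℝ) : |(tangent v).2| ≤ |(tangent v).1| := by
  unfold tangent; split_ifs with h
  · exact h
  · simpa using (not_le.mp h).le

lemma norm_le_one_of_sq_add_sq_eq_one {u : ℝ × ℝ} (hu : u.1 ^ 2 + u.2 ^ 2 = 1) : ‖u‖ ≤ 1 := by
  rw [Prod.norm_def, Real.norm_eq_abs, Real.norm_eq_abs]
  exact max_le (abs_le_of_sq_le_sq (by nlinarith) zero_le_one)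
    (abs_le_of_sq_le_sq (by nlinarith) zero_le_one)

lemma norm_basePoint (t : ℝ) (v : ℝ × ℝ) : ‖basePoint t v‖ = |t| := by
  unfold basePoint; split_ifs <;> simp

lemma eudist_tangent {v v' : ℝ × ℝ} (h : |v.2| ≤ |v.1| ↔ |v'.2| ≤ |v'.1|) :
    eudist (tangent v) (tangent v') = eudist v v' := by
  unfold tangent eudist
  by_cases hv : |v.2| ≤ |v.1|
  · simp only [hv, h.mp hv, if_true]
  · simp only [hv, mt h.mpr hv, if_false]
    congr 1; ring

lemma eudist_le_two_mul_abs_snd_sub {p q : ℝ × ℝ} (h : |p.1 - q.1| ≤ |p.2 - q.2|) :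
    eudist p q ≤ 2 * |p.2 - q.2| := by
  rw [eudist, Real.sqrt_le_left (by positivity)]
  nlinarith [sq_le_sq.mpr (h.trans_eq (abs_abs _).symm), sq_abs (p.2 - q.2)]

lemma succ_mul_div_pow_le {ε₀ KL : ℝ} (d : ℕ) (hε₀ : 0 ≤ ε₀) (hKL : 1 ≤ KL) :
    (d + 1) * (ε₀ / (10 ^ (5 * d) * KL)) ≤ ε₀ := by
  have hd : ((d + 1 : ℕ) : ℝ) ≤ 10 ^ (5 * d) := by
    exact_mod_cast Nat.lt_two_pow_self.trans_le <|
      (Nat.pow_le_pow_left (by norm_num) d).trans (Nat.pow_le_pow_right (by norm_num) (by omega))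
  push_cast at hd
  rw [mul_div_assoc', div_le_iff₀ (by positivity)]
  calc (d + 1) * ε₀ ≤ 10 ^ (5 * d) * KL * ε₀ := by
        gcongr; exact hd.trans (le_mul_of_one_le_right (by positivity) hKL)
    _ = ε₀ * (10 ^ (5 * d) * KL) := by ring

lemma IsBadLine.abs_tangent_snd_sub_le {d : ℕ} {a : ℕ → ℕ → ℝ} {ε₀ KL t : ℝ} {v v' : ℝ × ℝ}
    (hbad : IsBadLine d (hpoly d a) ε₀ KL t v) (hbad' : IsBadLine d (hpoly d a) ε₀ KL t v')
    (hε₀ : ε₀ ≤ 1 / 1000) (hKL : 1 ≤ KL) (hsmall : CoeffSmall d ε₀ a) (ht : |t| ≤ 10)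
    (hv : v.1 ^ 2 + v.2 ^ 2 = 1) (hv' : v'.1 ^ 2 + v'.2 ^ 2 = 1)
    (hcls : dirClass v = dirClass v') :
    |(tangent v).2 - (tangent v').2| ≤ 8 * ((d + 1) * (ε₀ / (10 ^ (5 * d) * KL))) ∧
      eudist v v' ≤ 2 * |(tangent v).2 - (tangent v').2| := by
  obtain ⟨ha20, ha22, -⟩ := hsmall.each_term_le
  have hε0 : 0 ≤ ε₀ := (abs_nonneg _).trans ha20
  have hθ : 0 ≤ ε₀ / (10 ^ (5 * d) * KL) := by positivity
  have hbranch : |v.2| ≤ |v.1| ↔ |v'.2| ≤ |v'.1| := by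
    simpa [dirClass] using congrArg Prod.fst hcls
  have hsign : 0 ≤ (tangent v).1 * (tangent v').1 := by
    have hiff : 0 ≤ (tangent v).1 ↔ 0 ≤ (tangent v').1 := by
      simpa [dirClass] using congrArg Prod.snd hcls
    by_cases h0 : 0 ≤ (tangent v).1
    · exact mul_nonneg h0 (hiff.mp h0)
    · exact mul_nonneg_of_nonpos_of_nonpos (not_le.mp h0).le (not_le.mp (mt hiff.mpr h0)).le
  have hbase : basePoint t v' = basePoint t v := by simp only [basePoint, hbranch]
  have hb : ‖basePoint t v‖ ≤ 10 := (norm_basePoint t v).trans_le ht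
  have hu := (tangent_sq_add_sq v).trans hv
  have hu' := (tangent_sq_add_sq v').trans hv'
  have hquad {w : ℝ × ℝ} (hw : IsBadLine d (hpoly d a) ε₀ KL t w) :
      |hpolyQuad a (tangent w) + secondDiff (hpolyHigh d a) (basePoint t w) (tangent w) / 2| ≤
        (d + 1) * (ε₀ / (10 ^ (5 * d) * KL)) := by
    have := hw.abs_secondDiff_le hθ
    rw [secondDiff_uncurry_hpoly, abs_mul, abs_two] at this
    linarith
  have hq' := hquad hbad'
  rw [hbase] at hq'
  obtain ⟨hsnd, hfst⟩ := abs_snd_sub_le_of_abs_hpolyQuad_add_le hε₀ (succ_mul_div_pow_le d hε0 hKL)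
    ha20 ha22 hu hu' (abs_tangent_snd_le v) (abs_tangent_snd_le v') hsign
    (hsmall.abs_secondDiff_hpolyHigh_le hb (norm_le_one_of_sq_add_sq_eq_one hu))
    (hsmall.abs_secondDiff_hpolyHigh_le hb (norm_le_one_of_sq_add_sq_eq_one hu'))
    (hsmall.abs_secondDiff_hpolyHigh_sub_le hb (norm_le_one_of_sq_add_sq_eq_one hu)
      (norm_le_one_of_sq_add_sq_eq_one hu'))
    (hquad hbad) hq'
  exact ⟨hsnd, (eudist_tangent hbranch).symm.trans_le (eudist_le_two_mul_abs_snd_sub hfst)⟩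

lemma finite_and_ncard_le_of_separated {α : Type*} {s : Set α} (f : α → ℝ) {r L : ℝ}
    (hr : 0 < r) (hL : 0 ≤ L) (hsep : ∀ x ∈ s, ∀ y ∈ s, x ≠ y → r ≤ |f x - f y|)
    (hdiam : ∀ x ∈ s, ∀ y ∈ s, |f x - f y| ≤ L) :
    s.Finite ∧ (s.ncard : ℝ) ≤ 2 * L / r + 1 := by
  rcases s.eq_empty_or_nonempty with rfl | ⟨x₀, hx₀⟩
  · simp only [Set.finite_empty, Set.ncard_empty, Nat.cast_zero, true_and]; positivity
  have hpos {x} (hx : x ∈ s) : 0 ≤ (f x - f x₀ + L) / r := by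
    have := abs_le.mp (hdiam x hx x₀ hx₀); exact div_nonneg (by linarith) hr.le
  let g : α → ℕ := fun x => ⌊(f x - f x₀ + L) / r⌋₊
  have hmaps : Set.MapsTo g s (Finset.range (⌊2 * L / r⌋₊ + 1)) := by
    intro x hx
    have := abs_le.mp (hdiam x hx x₀ hx₀)
    simp only [Finset.coe_range, Set.mem_Iio, Nat.lt_succ_iff, g]
    exact Nat.floor_le_floor (by gcongr; linarith)
  have hinj : Set.InjOn g s := by
    intro x hx y hy hxy
    by_contra hne
    have h1 := Nat.floor_le (hpos hx)
    have h2 := Nat.lt_floor_add_one ((f x - f x₀ + L) / r)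
    have h3 := Nat.floor_le (hpos hy)
    have h4 := Nat.lt_floor_add_one ((f y - f x₀ + L) / r)
    simp only [g] at hxy
    rw [hxy] at h1 h2
    have hlt : |(f x - f x₀ + L) / r - (f y - f x₀ + L) / r| < 1 :=
      abs_sub_lt_iff.mpr ⟨by linarith, by linarith⟩
    rw [← sub_div, add_sub_add_right_eq_sub, sub_sub_sub_cancel_right, abs_div, abs_of_pos hr,
      div_lt_one hr] at hlt
    exact (hsep x hx y hy hne).not_gt hlt
  have hrange := Finset.finite_toSet (Finset.range (⌊2 * L / r⌋₊ + 1))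
  refine ⟨Set.Finite.of_injOn hmaps hinj hrange, ?_⟩
  have hcard := Set.ncard_le_ncard_of_injOn g hmaps hinj hrange
  rw [Set.ncard_coe_finset, Finset.card_range] at hcard
  calc (s.ncard : ℝ) ≤ ⌊2 * L / r⌋₊ + 1 := by exact_mod_cast hcard
    _ ≤ 2 * L / r + 1 := by gcongr; exact Nat.floor_le (by positivity)

lemma finite_and_ncard_le_of_fibers {α β : Type*} {s : Set α} {t : Finset β} (f : α → β) {n : ℝ}
    (hmaps : ∀ x ∈ s, f x ∈ t)
    (hfib : ∀ b ∈ t, {x ∈ s | f x = b}.Finite ∧ ({x ∈ s | f x = b}.ncard : ℝ) ≤ n) :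
    s.Finite ∧ (s.ncard : ℝ) ≤ t.card * n := by
  have hs : s = ⋃ b ∈ t, {x ∈ s | f x = b} := by
    ext x
    simp only [Set.mem_iUnion, Set.mem_sep_iff, exists_prop]
    exact ⟨fun hx => ⟨f x, hmaps x hx, hx, rfl⟩, fun ⟨_, _, hx, _⟩ => hx⟩
  rw [hs]
  refine ⟨t.finite_toSet.biUnion fun b hb => (hfib b hb).1, ?_⟩
  calc ((⋃ b ∈ t, {x ∈ s | f x = b}).ncard : ℝ) ≤ ∑ b ∈ t, ({x ∈ s | f x = b}.ncard : ℝ) := by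
        exact_mod_cast t.set_ncard_biUnion_le _
    _ ≤ ∑ _b ∈ t, n := Finset.sum_le_sum fun b hb => (hfib b hb).2
    _ = t.card * n := by rw [Finset.sum_const, nsmul_eq_mul]

def badParams (d : ℕ) (h : ℝ → ℝ → ℝ) (ε₀ KL : ℝ) (D : Set (ℝ × ℝ)) : Set (ℝ × (ℝ × ℝ)) :=
  {q | IsBadParam d h ε₀ KL D q.1 q.2}

lemma div_pow_mul_eq_pow_mul_c1 (d : ℕ) (ε₀ KL : ℝ) :
    ε₀ / (10 ^ (5 * d) * KL) = 10 ^ (5 * d) * c1 d ε₀ KL := by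
  rw [c1, show 10 * d = 5 * d + 5 * d by ring, pow_add, mul_div_assoc', mul_assoc,
    mul_div_mul_left _ _ (by positivity)]

lemma finite_and_ncard_badParams_fiber_le {d : ℕ} {a : ℕ → ℕ → ℝ} {ε₀ KL : ℝ}
    {D : Set (ℝ × ℝ)} (hε₀ : 0 < ε₀) (hε₀' : ε₀ ≤ 1 / 1000) (hKL : 1 ≤ KL)
    (hsmall : CoeffSmall d ε₀ a) (hD : MaxSepSet (c1 d ε₀ KL) D) (b : ℝ × Bool × Bool) :
    {q ∈ badParams d (hpoly d a) ε₀ KL D | (q.1, dirClass q.2) = b}.Finite ∧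
      ({q ∈ badParams d (hpoly d a) ε₀ KL D | (q.1, dirClass q.2) = b}.ncard : ℝ) ≤
        32 * (d + 1) * 10 ^ (5 * d) + 1 := by
  have hc₁ : 0 < c1 d ε₀ KL := by unfold c1; positivity
  set F := {q ∈ badParams d (hpoly d a) ε₀ KL D | (q.1, dirClass q.2) = b}
  have hpair : ∀ q ∈ F, ∀ q' ∈ F, q.1 = q'.1 ∧ (q.2 ≠ q'.2 → c1 d ε₀ KL ≤ eudist q.2 q'.2) ∧
      |(tangent q.2).2 - (tangent q'.2).2| ≤ 8 * ((d + 1) * (ε₀ / (10 ^ (5 * d) * KL))) ∧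
      eudist q.2 q'.2 ≤ 2 * |(tangent q.2).2 - (tangent q'.2).2| := by
    rintro ⟨t, v⟩ ⟨⟨-, ht, hvD, hbad⟩, hqb⟩ ⟨t', v'⟩ ⟨⟨-, -, hvD', hbad'⟩, hqb'⟩
    obtain ⟨rfl, hcls⟩ : t = t' ∧ dirClass v = dirClass v' := by
      rw [← hqb'] at hqb; simpa using hqb
    exact ⟨rfl, hD.2.1 v hvD v' hvD',
      hbad.abs_tangent_snd_sub_le hbad' hε₀' hKL hsmall ht (hD.1 v hvD) (hD.1 v' hvD') hcls⟩
  have hbound := finite_and_ncard_le_of_separated (s := F) (fun q => (tangent q.2).2)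
    (half_pos hc₁) (by positivity)
    (fun q hq q' hq' hne => by
      obtain ⟨h1, hsep, -, hdist⟩ := hpair q hq q' hq'
      have := hsep fun h2 => hne (Prod.ext h1 h2)
      linarith)
    (fun q hq q' hq' => (hpair q hq q' hq').2.2.1)
  refine ⟨hbound.1, hbound.2.trans_eq ?_⟩
  rw [div_pow_mul_eq_pow_mul_c1]
  field_simp
  ring

lemma mem_image_Icc_of_isBadParam {d : ℕ} {h : ℝ → ℝ → ℝ} {ε₀ KL t : ℝ} {D : Set (ℝ × ℝ)}
    {v : ℝ × ℝ} (hc₁ : 0 < c1 d ε₀ KL) (hbad : IsBadParam d h ε₀ KL D t v) :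
    t ∈ (Finset.Icc (-⌊10 / c1 d ε₀ KL⌋) ⌊10 / c1 d ε₀ KL⌋).image
      (fun m : ℤ => (m : ℝ) * c1 d ε₀ KL) := by
  obtain ⟨⟨m, rfl⟩, ht, -⟩ := hbad
  refine Finset.mem_image.mpr ⟨m, Finset.mem_Icc.mpr (abs_le.mp (Int.le_floor.mpr ?_)), rfl⟩
  rwa [Int.cast_abs, le_div_iff₀ hc₁, ← abs_of_pos hc₁, ← abs_mul]

lemma card_Icc_image_product_le {c : ℝ} (N : ℤ) (hN : 0 ≤ N) :
    ((((Finset.Icc (-N) N).image (fun m : ℤ => (m : ℝ) * c)) ×ˢ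
      (Finset.univ : Finset (Bool × Bool))).card : ℝ) ≤ (2 * N + 1) * 4 := by
  rw [Finset.card_product, Finset.card_univ, Fintype.card_prod, Fintype.card_bool, Nat.cast_mul,
    show ((2 * 2 : ℕ) : ℝ) = 4 by norm_num]
  gcongr
  calc (((Finset.Icc (-N) N).image (fun m : ℤ => (m : ℝ) * c)).card : ℝ)
      ≤ (Finset.Icc (-N) N).card := by exact_mod_cast Finset.card_image_le
    _ = 2 * N + 1 := by
        rw [Int.card_Icc, show N + 1 - -N = 2 * N + 1 by ring]
        exact_mod_cast Int.toNat_of_nonneg (by omega)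

lemma mul_succ_le_pow_div {c M : ℝ} (d : ℕ) (hd : 1 ≤ d) (hc : 0 < c) (hc1 : c ≤ 1)
    (hM : M ≤ 10 / c) :
    (2 * M + 1) * 4 * (32 * (d + 1) * 10 ^ (5 * d) + 1) ≤ 10 ^ (10 * d) / c := by
  have hP : (2772 * (d + 1) : ℝ) ≤ 10 ^ (5 * d) := by
    have hd1 : d + 1 ≤ 10 ^ d :=
      Nat.lt_two_pow_self.trans_le (Nat.pow_le_pow_left (by norm_num) d)
    have h4 : 2772 ≤ 10 ^ (4 * d) :=
      (by norm_num : 2772 ≤ 10 ^ 4).trans (Nat.pow_le_pow_right (by norm_num) (by omega))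
    exact_mod_cast (Nat.mul_le_mul h4 hd1).trans_eq (by rw [← pow_add]; ring_nf)
  have h1 : 2 * M + 1 ≤ 21 / c := by
    have : 1 ≤ 1 / c := by rw [le_div_iff₀ hc]; linarith
    calc 2 * M + 1 ≤ 20 / c + 1 / c := by linarith [show 2 * (10 / c) = 20 / c by ring]
      _ = 21 / c := by ring
  have h2 : 32 * (d + 1) * (10 : ℝ) ^ (5 * d) + 1 ≤ 33 * (d + 1) * 10 ^ (5 * d) := by
    nlinarith [one_le_pow₀ (M₀ := ℝ) (a := 10) (by norm_num) (n := 5 * d)]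
  calc (2 * M + 1) * 4 * (32 * (d + 1) * 10 ^ (5 * d) + 1)
      ≤ 21 / c * 4 * (33 * (d + 1) * 10 ^ (5 * d)) := by gcongr
    _ = 2772 * (d + 1) * 10 ^ (5 * d) / c := by ring
    _ ≤ 10 ^ (5 * d) * 10 ^ (5 * d) / c := by gcongr
    _ = 10 ^ (10 * d) / c := by rw [← pow_add]; ring_nf

theorem statement2 (d : ℕ) (hd : 3 ≤ d) :
    ∃ ε₀' > (0 : ℝ), ∀ ε₀ : ℝ, 0 < ε₀ → ε₀ ≤ ε₀' →
      ∃ K₀ : ℝ, ∀ KL : ℝ, K₀ ≤ KL →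
        ∀ a : ℕ → ℕ → ℝ, CoeffSmall d ε₀ a →
          ∀ D : Set (ℝ × ℝ), MaxSepSet (c1 d ε₀ KL) D →
            {q : ℝ × (ℝ × ℝ) | IsBadParam d (hpoly d a) ε₀ KL D q.1 q.2}.Finite ∧
            (({q : ℝ × (ℝ × ℝ) |
                IsBadParam d (hpoly d a) ε₀ KL D q.1 q.2}.ncard : ℝ) ≤
              10 ^ (10 * d) / c1 d ε₀ KL) := by
  refine ⟨1 / 1000, by norm_num, fun ε₀ hε₀ hε₀' => ⟨1, fun KL hKL a hsmall D hD => ?_⟩⟩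
  have hc₁ : 0 < c1 d ε₀ KL := by unfold c1; positivity
  have hc₁' : c1 d ε₀ KL ≤ 1 := by
    rw [c1, div_le_one (by positivity)]
    nlinarith [one_le_pow₀ (M₀ := ℝ) (a := 10) (by norm_num) (n := 10 * d)]
  set N := ⌊10 / c1 d ε₀ KL⌋
  obtain ⟨hfin, hcard⟩ := finite_and_ncard_le_of_fibers (s := badParams d (hpoly d a) ε₀ KL D)
    (t := (Finset.Icc (-N) N).image (fun m : ℤ => (m : ℝ) * c1 d ε₀ KL) ×ˢ Finset.univ)
    (fun q => (q.1, dirClass q.2))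
    (fun q hq => Finset.mem_product.mpr ⟨mem_image_Icc_of_isBadParam hc₁ hq, Finset.mem_univ _⟩)
    (fun b _ => finite_and_ncard_badParams_fiber_le hε₀ hε₀' hKL hsmall hD b)
  refine ⟨hfin, hcard.trans ?_⟩
  calc _ ≤ (2 * (N : ℝ) + 1) * 4 * (32 * (d + 1) * 10 ^ (5 * d) + 1) := by
        gcongr; exact card_Icc_image_product_le N (Int.floor_nonneg.mpr (by positivity))
    _ ≤ 10 ^ (10 * d) / c1 d ε₀ KL := mul_succ_le_pow_div d (by omega) hc₁ hc₁' (Int.floor_le _)
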